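/- Let T > 0, μ > 0 and C ≥ 0. Let X, D, Ω : [0,T] → ℝ be nonnegative functions such that X is continuous and D, Ω are Lebesgue integrable on [0,T]. Assume that for every t ∈ [0,T] one has X(t) + μ·∫₀ᵗ D(τ) dτ ≤ X(0) + ∫₀ᵗ (Ω(τ)·X(τ) + C·X(τ)·D(τ)) dτ. If, in addition, 2·C·X(0)·exp(∫₀ᵀ Ω(τ) dτ) < μ, then for every t ∈ [0,T] one has X(t) + (μ/2)·∫₀ᵗ D(τ) dτ ≤ X(0)·exp(∫₀ᵗ Ω(τ) dτ). -/

import Mathlib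

/-!
As long as `C X ≤ μ / 2`, the term `C X D` is absorbed by half of `μ D`, so
`Y = X + (μ / 2) ∫ D` satisfies the linear inequality `Y ≤ X 0 + ∫ Ω Y`, and Gronwall gives
`Y ≤ X 0 exp (∫ Ω)`. Then `C X ≤ C X 0 exp (∫₀ᵀ Ω) < μ / 2`, strictly, so there is no first
time at which `C X` reaches `μ / 2`. Gronwall's inequality for a merely integrable rate is
proved by the same first-failure argument.
-/

open MeasureTheory intervalIntegral Set Topology Filter Real

theorem forall_lt_of_forall_Ico_lt {f g : ℝ → ℝ} {a b : ℝ} (hf : ContinuousOn f (Icc a b))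
    (hg : ContinuousOn g (Icc a b))
    (h : ∀ t ∈ Icc a b, (∀ s ∈ Ico a t, f s < g s) → f t < g t) :
    ∀ t ∈ Icc a b, f t < g t := by
  by_contra! hbad
  obtain ⟨t₀, ⟨ht₀, hgf⟩, hleast⟩ : ∃ t₀, IsLeast {t ∈ Icc a b | g t ≤ f t} t₀ :=
    (isCompact_Icc.of_isClosed_subset (isClosed_Icc.isClosed_le hg hf)
      (sep_subset _ _)).exists_isLeast hbad
  refine (h t₀ ht₀ fun s hs => ?_).not_ge hgf
  by_contra! hs'
  exact (hleast ⟨⟨hs.1, hs.2.le.trans ht₀.2⟩, hs'⟩).not_gt hs.2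

theorem ContinuousOn.exists_mem_Ico_sub_lt {f : ℝ → ℝ} {a b t δ : ℝ}
    (hf : ContinuousOn f (Icc a b)) (ht : t ∈ Icc a b) (hat : a < t) (hδ : 0 < δ) :
    ∃ r ∈ Ico a t, f t - f r < δ := by
  have hnhds : Icc a b ∈ 𝓝[<] t :=
    mem_of_superset (Ico_mem_nhdsLT hat)
      (Ico_subset_Icc_self.trans (Icc_subset_Icc_right ht.2))
  have hcont : ContinuousWithinAt (fun r => f t - f r) (Icc a b) t :=
    continuousWithinAt_const.sub (hf t ht)
  exact (Eventually.and (Ico_mem_nhdsLT hat) ((hcont.tendsto.eventually_lt_const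
    (by simpa using hδ)).filter_mono (nhdsWithin_le_of_mem hnhds))).exists

theorem one_le_one_sub_mul_exp {k x : ℝ} (hk : 0 ≤ k) (hx : 0 ≤ x) (hkx : k * x ≤ k - 1) :
    1 ≤ (1 - x) * exp (k * x) := by
  have hx1 : 0 ≤ 1 - x := by nlinarith
  calc 1 ≤ (1 - x) * (k * x + 1) := by nlinarith
    _ ≤ (1 - x) * exp (k * x) := mul_le_mul_of_nonneg_left (add_one_le_exp _) hx1

section Gronwall

variable {a b c : ℝ} {W Y : ℝ → ℝ}

theorem add_integral_mul_mul_one_sub_integral_le (hY : ContinuousOn Y (Icc a b))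
    (hY0 : ∀ t ∈ Icc a b, 0 ≤ Y t) (hW0 : ∀ t ∈ Icc a b, 0 ≤ W t)
    (hW : IntervalIntegrable W volume a b) (h : ∀ t ∈ Icc a b, Y t ≤ c + ∫ s in a..t, W s * Y s)
    {r t : ℝ} (har : a ≤ r) (hrt : r ≤ t) (htb : t ≤ b) :
    (c + ∫ s in a..t, W s * Y s) * (1 - ∫ s in r..t, W s) ≤ c + ∫ s in a..r, W s * Y s := by
  set E : ℝ → ℝ := fun t => c + ∫ s in a..t, W s * Y s
  have hWY : IntervalIntegrable (fun s => W s * Y s) volume a b :=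
    hW.mul_continuousOn (hY.mono (uIcc_of_le (har.trans (hrt.trans htb))).subset)
  have hsub {x y : ℝ} (hx : a ≤ x) (hxy : x ≤ y) (hy : y ≤ b) : uIcc x y ⊆ uIcc a b :=
    uIcc_subset_uIcc (Icc_subset_uIcc ⟨hx, hxy.trans hy⟩) (Icc_subset_uIcc ⟨hx.trans hxy, hy⟩)
  have hE_mono {x : ℝ} (hx : x ∈ Icc r t) : E x ≤ E t := by
    refine (add_le_add_iff_left c).2 (integral_mono_interval le_rfl (har.trans hx.1) hx.2 ?_
      (hWY.mono_set (hsub le_rfl (har.trans hrt) htb)))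
    filter_upwards [ae_restrict_mem measurableSet_Ioc] with s hs
    exact mul_nonneg (hW0 s ⟨hs.1.le, hs.2.trans htb⟩) (hY0 s ⟨hs.1.le, hs.2.trans htb⟩)
  have hincr : E t - E r = ∫ s in r..t, W s * Y s := by
    simp only [E, add_sub_add_left_eq_sub]
    exact integral_interval_sub_left (hWY.mono_set (hsub le_rfl (har.trans hrt) htb))
      (hWY.mono_set (hsub le_rfl har (hrt.trans htb)))
  have hle : ∫ s in r..t, W s * Y s ≤ (∫ s in r..t, W s) * E t := by
    rw [← intervalIntegral.integral_mul_const]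
    refine integral_mono_on hrt (hWY.mono_set (hsub har hrt htb))
      ((hW.mono_set (hsub har hrt htb)).mul_const _) fun x hx => ?_
    have hxab : x ∈ Icc a b := ⟨har.trans hx.1, hx.2.trans htb⟩
    exact mul_le_mul_of_nonneg_left ((h x hxab).trans (hE_mono hx)) (hW0 x hxab)
  change E t * _ ≤ E r
  linarith

/-- The slack `ε` in the constant gives the bound at `a`; the slack `ε` in the rate absorbs the
factor `1 - ∫ W` over short intervals. -/
theorem add_integral_mul_lt_mul_exp {ε : ℝ} (hε : 0 < ε) (hab : a ≤ b)
    (hY : ContinuousOn Y (Icc a b))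
    (hY0 : ∀ t ∈ Icc a b, 0 ≤ Y t) (hW0 : ∀ t ∈ Icc a b, 0 ≤ W t)
    (hW : IntervalIntegrable W volume a b) (h : ∀ t ∈ Icc a b, Y t ≤ c + ∫ s in a..t, W s * Y s) :
    ∀ t ∈ Icc a b,
      c + ∫ s in a..t, W s * Y s < (c + ε) * exp ((1 + ε) * ∫ s in a..t, W s) := by
  set A : ℝ → ℝ := fun t => ∫ s in a..t, W s
  have hA : ContinuousOn A (Icc a b) :=
    (continuousOn_primitive_interval' hW left_mem_uIcc).mono Icc_subset_uIcc
  have hWY : ContinuousOn (fun t => ∫ s in a..t, W s * Y s) (Icc a b) :=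
    (continuousOn_primitive_interval' (hW.mul_continuousOn (hY.mono (uIcc_of_le hab).subset))
      left_mem_uIcc).mono Icc_subset_uIcc
  refine forall_lt_of_forall_Ico_lt (continuousOn_const.add hWY)
    (continuousOn_const.mul (continuous_exp.comp_continuousOn (continuousOn_const.mul hA)))
    fun t ht hlt => ?_
  rcases ht.1.eq_or_lt with rfl | hat
  · simpa using hε
  have hk : 0 < 1 + ε := by linarith
  obtain ⟨r, hr, hΔ⟩ := hA.exists_mem_Ico_sub_lt ht hat (div_pos hε hk)
  have hAr : A t - A r = ∫ s in r..t, W s :=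
    integral_interval_sub_left (hW.mono_set (uIcc_subset_uIcc_left (Icc_subset_uIcc ht)))
      (hW.mono_set (uIcc_subset_uIcc_left (Icc_subset_uIcc ⟨hr.1, hr.2.le.trans ht.2⟩)))
  have hΔ0 : 0 ≤ A t - A r :=
    hAr ▸ integral_nonneg hr.2.le fun s hs => hW0 s ⟨hr.1.trans hs.1, hs.2.trans ht.2⟩
  have hstep := add_integral_mul_mul_one_sub_integral_le hY hY0 hW0 hW h hr.1 hr.2.le ht.2
  rw [← hAr] at hstep
  have hfactor : 1 ≤ (1 - (A t - A r)) * exp ((1 + ε) * (A t - A r)) :=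
    one_le_one_sub_mul_exp hk.le hΔ0 (by rw [lt_div_iff₀' hk] at hΔ; linarith)
  have hexp :
      exp ((1 + ε) * A t) = exp ((1 + ε) * A r) * exp ((1 + ε) * (A t - A r)) := by
    rw [← exp_add]; ring_nf
  have hE0 : 0 ≤ c + ∫ s in a..t, W s * Y s := (hY0 t ht).trans (h t ht)
  calc c + ∫ s in a..t, W s * Y s
      ≤ (c + ∫ s in a..t, W s * Y s) * ((1 - (A t - A r)) * exp ((1 + ε) * (A t - A r))) :=
        le_mul_of_one_le_right hE0 hfactor
    _ = (c + ∫ s in a..t, W s * Y s) * (1 - (A t - A r)) * exp ((1 + ε) * (A t - A r)) := by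
        ring
    _ < (c + ε) * exp ((1 + ε) * A r) * exp ((1 + ε) * (A t - A r)) :=
        mul_lt_mul_of_pos_right (hstep.trans_lt (hlt r hr)) (exp_pos _)
    _ = (c + ε) * exp ((1 + ε) * A t) := by rw [hexp, mul_assoc]

theorem le_mul_exp_integral_of_le_add_integral (hY : ContinuousOn Y (Icc a b))
    (hY0 : ∀ t ∈ Icc a b, 0 ≤ Y t) (hW0 : ∀ t ∈ Icc a b, 0 ≤ W t)
    (hW : IntervalIntegrable W volume a b) (h : ∀ t ∈ Icc a b, Y t ≤ c + ∫ s in a..t, W s * Y s) :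
    ∀ t ∈ Icc a b, Y t ≤ c * exp (∫ s in a..t, W s) := by
  intro t ht
  have hlim : Tendsto (fun ε => (c + ε) * exp ((1 + ε) * ∫ s in a..t, W s)) (𝓝[>] 0)
      (𝓝 (c * exp (∫ s in a..t, W s))) := by
    have hcont : Continuous fun ε => (c + ε) * exp ((1 + ε) * ∫ s in a..t, W s) := by fun_prop
    simpa using (hcont.continuousWithinAt (s := Ioi 0) (x := 0)).tendsto
  refine ge_of_tendsto hlim (eventually_nhdsWithin_of_forall fun ε hε => ?_)
  exact (h t ht).trans (add_integral_mul_lt_mul_exp hε (ht.1.trans ht.2) hY hY0 hW0 hW h t ht).le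

end Gronwall

section Bootstrap

variable {T μ C : ℝ} {X D Ω : ℝ → ℝ}

theorem add_half_mul_integral_le_of_mul_le (hμ : 0 ≤ μ)
    (hDnn : ∀ t ∈ Icc (0:ℝ) T, 0 ≤ D t) (hΩnn : ∀ t ∈ Icc (0:ℝ) T, 0 ≤ Ω t)
    (hXcont : ContinuousOn X (Icc (0:ℝ) T)) (hDint : IntervalIntegrable D volume 0 T)
    (hΩint : IntervalIntegrable Ω volume 0 T)
    (hineq : ∀ t ∈ Icc (0:ℝ) T, X t + μ * ∫ τ in (0:ℝ)..t, D τ ≤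
      X 0 + ∫ τ in (0:ℝ)..t, (Ω τ * X τ + C * X τ * D τ))
    {s : ℝ} (hs : s ∈ Icc 0 T) (hbound : ∀ τ ∈ Ioo 0 s, C * X τ ≤ μ / 2) :
    X s + μ / 2 * ∫ τ in (0:ℝ)..s, D τ ≤
      X 0 + ∫ τ in (0:ℝ)..s, Ω τ * (X τ + μ / 2 * ∫ σ in (0:ℝ)..τ, D σ) := by
  have hsub : uIcc 0 s ⊆ uIcc 0 T := uIcc_subset_uIcc_left (Icc_subset_uIcc hs)
  have hX : ContinuousOn X (uIcc 0 s) :=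
    hXcont.mono ((uIcc_of_le hs.1).trans_subset (Icc_subset_Icc_right hs.2))
  have hD : IntervalIntegrable D volume 0 s := hDint.mono_set hsub
  have hΩX : IntervalIntegrable (fun τ => Ω τ * X τ) volume 0 s :=
    (hΩint.mono_set hsub).mul_continuousOn hX
  have hCXD : IntervalIntegrable (fun τ => C * X τ * D τ) volume 0 s :=
    hD.continuousOn_mul (continuousOn_const.mul hX)
  have hΩY :
      IntervalIntegrable (fun τ => Ω τ * (X τ + μ / 2 * ∫ σ in (0:ℝ)..τ, D σ)) volume 0 s :=
    (hΩint.mono_set hsub).mul_continuousOn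
      (hX.add (continuousOn_const.mul (continuousOn_primitive_interval' hD left_mem_uIcc)))
  have hCXD_le : ∫ τ in (0:ℝ)..s, C * X τ * D τ ≤ μ / 2 * ∫ τ in (0:ℝ)..s, D τ := by
    rw [← intervalIntegral.integral_const_mul]
    exact integral_mono_on_of_le_Ioo hs.1 hCXD (hD.const_mul _) fun τ hτ =>
      mul_le_mul_of_nonneg_right (hbound τ hτ) (hDnn τ ⟨hτ.1.le, hτ.2.le.trans hs.2⟩)
  have hΩX_le : ∫ τ in (0:ℝ)..s, Ω τ * X τ ≤
      ∫ τ in (0:ℝ)..s, Ω τ * (X τ + μ / 2 * ∫ σ in (0:ℝ)..τ, D σ) := by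
    refine integral_mono_on hs.1 hΩX hΩY fun τ hτ => ?_
    have hD0 : 0 ≤ ∫ σ in (0:ℝ)..τ, D σ :=
      integral_nonneg hτ.1 fun σ hσ => hDnn σ ⟨hσ.1, hσ.2.trans (hτ.2.trans hs.2)⟩
    exact mul_le_mul_of_nonneg_left (le_add_of_nonneg_right (by positivity))
      (hΩnn τ ⟨hτ.1, hτ.2.trans hs.2⟩)
  have h := hineq s hs
  rw [intervalIntegral.integral_add hΩX hCXD] at h
  linarith

theorem add_half_mul_integral_le_mul_exp_of_mul_le (hμ : 0 ≤ μ)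
    (hXnn : ∀ t ∈ Icc (0:ℝ) T, 0 ≤ X t) (hDnn : ∀ t ∈ Icc (0:ℝ) T, 0 ≤ D t)
    (hΩnn : ∀ t ∈ Icc (0:ℝ) T, 0 ≤ Ω t)
    (hXcont : ContinuousOn X (Icc (0:ℝ) T)) (hDint : IntervalIntegrable D volume 0 T)
    (hΩint : IntervalIntegrable Ω volume 0 T)
    (hineq : ∀ t ∈ Icc (0:ℝ) T, X t + μ * ∫ τ in (0:ℝ)..t, D τ ≤
      X 0 + ∫ τ in (0:ℝ)..t, (Ω τ * X τ + C * X τ * D τ)) :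
    ∀ t ∈ Icc 0 T, (∀ s ∈ Ico 0 t, C * X s ≤ μ / 2) →
      ∀ s ∈ Icc 0 t,
        X s + μ / 2 * ∫ τ in (0:ℝ)..s, D τ ≤ X 0 * exp (∫ τ in (0:ℝ)..s, Ω τ) := by
  intro t ht hbound
  have hsub : Icc 0 t ⊆ Icc 0 T := Icc_subset_Icc_right ht.2
  have hD : ContinuousOn (fun s => ∫ τ in (0:ℝ)..s, D τ) (Icc 0 t) :=
    (continuousOn_primitive_interval' hDint left_mem_uIcc).mono (hsub.trans Icc_subset_uIcc)
  refine le_mul_exp_integral_of_le_add_integral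
    ((hXcont.mono hsub).add (continuousOn_const.mul hD)) (fun s hs => ?_)
    (fun s hs => hΩnn s (hsub hs))
    (hΩint.mono_set (uIcc_subset_uIcc_left (Icc_subset_uIcc ht))) (fun s hs => ?_)
  · exact add_nonneg (hXnn s (hsub hs)) (mul_nonneg (by positivity)
      (integral_nonneg hs.1 fun σ hσ => hDnn σ (hsub ⟨hσ.1, hσ.2.trans hs.2⟩)))
  · exact add_half_mul_integral_le_of_mul_le hμ hDnn hΩnn hXcont hDint hΩint hineq (hsub hs)
      fun τ hτ => hbound τ ⟨hτ.1.le, hτ.2.trans_le hs.2⟩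

end Bootstrap

theorem bootstrap_gronwall_general (T μ C : ℝ) (hμ : 0 < μ) (hC : 0 ≤ C)
    (X D Ω : ℝ → ℝ)
    (hXnn : ∀ t ∈ Set.Icc (0:ℝ) T, 0 ≤ X t)
    (hDnn : ∀ t ∈ Set.Icc (0:ℝ) T, 0 ≤ D t)
    (hΩnn : ∀ t ∈ Set.Icc (0:ℝ) T, 0 ≤ Ω t)
    (hXcont : ContinuousOn X (Set.Icc (0:ℝ) T))
    (hDint : IntervalIntegrable D volume 0 T)
    (hΩint : IntervalIntegrable Ω volume 0 T)
    (hineq : ∀ t ∈ Set.Icc (0:ℝ) T,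
      X t + μ * ∫ τ in (0:ℝ)..t, D τ ≤
        X 0 + ∫ τ in (0:ℝ)..t, (Ω τ * X τ + C * X τ * D τ))
    (hsmall : 2 * C * X 0 * Real.exp (∫ τ in (0:ℝ)..T, Ω τ) < μ) :
    ∀ t ∈ Set.Icc (0:ℝ) T,
      X t + (μ / 2) * ∫ τ in (0:ℝ)..t, D τ ≤
        X 0 * Real.exp (∫ τ in (0:ℝ)..t, Ω τ) := by
  have key := add_half_mul_integral_le_mul_exp_of_mul_le hμ.le hXnn hDnn hΩnn hXcont hDint hΩint
    hineq
  have hCX : ∀ t ∈ Icc 0 T, C * X t < μ / 2 := by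
    refine forall_lt_of_forall_Ico_lt (continuousOn_const.mul hXcont) continuousOn_const
      fun t ht hbound => ?_
    have hD : 0 ≤ ∫ τ in (0:ℝ)..t, D τ :=
      integral_nonneg ht.1 fun σ hσ => hDnn σ ⟨hσ.1, hσ.2.trans ht.2⟩
    have hXt : X t ≤ X 0 * exp (∫ τ in (0:ℝ)..t, Ω τ) :=
      (le_add_of_nonneg_right (mul_nonneg (by positivity) hD)).trans
        (key t ht (fun s hs => (hbound s hs).le) t (right_mem_Icc.2 ht.1))
    have hΩ : ∫ τ in (0:ℝ)..t, Ω τ ≤ ∫ τ in (0:ℝ)..T, Ω τ :=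
      integral_mono_interval le_rfl ht.1 ht.2 ((ae_restrict_mem measurableSet_Ioc).mono
        fun τ hτ => hΩnn τ (Ioc_subset_Icc_self hτ)) hΩint
    have hX0 : 0 ≤ X 0 := hXnn 0 (left_mem_Icc.2 (ht.1.trans ht.2))
    calc C * X t ≤ C * (X 0 * exp (∫ τ in (0:ℝ)..T, Ω τ)) :=
          mul_le_mul_of_nonneg_left (hXt.trans (by gcongr)) hC
      _ < μ / 2 := by linarith
  exact fun t ht => key T ⟨ht.1.trans ht.2, le_rfl⟩
    (fun s hs => (hCX s (Ico_subset_Icc_self hs)).le) t ht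

/-- **Bootstrap (Gronwall-type) lemma.**  Let `T > 0`, `μ > 0`, `C ≥ 0` and let
`X, D, Ω : [0,T] → ℝ` be nonnegative with `X` continuous and `D, Ω` integrable on `[0,T]`.
If for every `t ∈ [0,T]`,
`X t + μ ∫₀ᵗ D ≤ X 0 + ∫₀ᵗ (Ω τ * X τ + C * X τ * D τ) dτ` and
`2 C X(0) exp(∫₀ᵀ Ω) < μ`, then for every `t ∈ [0,T]`,
`X t + (μ/2) ∫₀ᵗ D ≤ X 0 * exp (∫₀ᵗ Ω)`. -/
theorem bootstrap_gronwall (T μ C : ℝ) (hT : 0 < T) (hμ : 0 < μ) (hC : 0 ≤ C)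
    (X D Ω : ℝ → ℝ)
    (hXnn : ∀ t ∈ Set.Icc (0:ℝ) T, 0 ≤ X t)
    (hDnn : ∀ t ∈ Set.Icc (0:ℝ) T, 0 ≤ D t)
    (hΩnn : ∀ t ∈ Set.Icc (0:ℝ) T, 0 ≤ Ω t)
    (hXcont : ContinuousOn X (Set.Icc (0:ℝ) T))
    (hDint : IntervalIntegrable D volume 0 T)
    (hΩint : IntervalIntegrable Ω volume 0 T)
    (hineq : ∀ t ∈ Set.Icc (0:ℝ) T,
      X t + μ * ∫ τ in (0:ℝ)..t, D τ ≤
        X 0 + ∫ τ in (0:ℝ)..t, (Ω τ * X τ + C * X τ * D τ))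
    (hsmall : 2 * C * X 0 * Real.exp (∫ τ in (0:ℝ)..T, Ω τ) < μ) :
    ∀ t ∈ Set.Icc (0:ℝ) T,
      X t + (μ / 2) * ∫ τ in (0:ℝ)..t, D τ ≤
        X 0 * Real.exp (∫ τ in (0:ℝ)..t, Ω τ) :=
  bootstrap_gronwall_general T μ C hμ hC X D Ω hXnn hDnn hΩnn hXcont hDint hΩint hineq hsmall
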